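/- arXiv:1011.1363 — 5 statements merged into one kernel-verified Lean document; each statement's English description precedes it below -/
import Mathlib

section
/- (Brauer's theorem) Let T be an n×n complex matrix with eigenpair (λ, v), i.e., T v = λ v with v ≠ 0. Let u ∈ ℂⁿ satisfy u* v = 1 and let s ∈ ℂ. Then the characteristic polynomial of T + s v u* equals the characteristic polynomial of T multiplied by (x − λ − s)/(x − λ); equivalently, the multiset of eigenvalues of T + s v u* is obtained from that of T by replacing one occurrence of λ with λ + s. -/
/-!
Over the fraction field of `ℂ[X]` the characteristic matrix `A = X - T` is invertible and
`A v = (X - λ) v`. By the matrix determinant lemma,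
`det (A - s v u*) = det A * (1 - s u* A⁻¹ v) = det A * (1 - s / (X - λ))`,
which clears to the claimed polynomial identity.
-/

open Polynomial Matrix

namespace Matrix

variable {n R : Type*} [Fintype n] [DecidableEq n] [CommRing R]

theorem det_add_vecMulVec_mul_of_isUnit_det {A : Matrix n n R}
    (hA : IsUnit A.det) {v : n → R} {μ : R} (hv : A *ᵥ v = μ • v) (w : n → R) :
    (A + vecMulVec v w).det * μ = A.det * (μ + w ⬝ᵥ v) := by
  have hAinv : μ • (A⁻¹ *ᵥ v) = v := by
    rw [← mulVec_smul, ← hv, mulVec_mulVec, nonsing_inv_mul A hA, one_mulVec]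
  calc (A + vecMulVec v w).det * μ = A.det * (1 + w ⬝ᵥ A⁻¹ *ᵥ v) * μ := by
        rw [vecMulVec_eq Unit, det_add_replicateCol_mul_replicateRow hA,
          det_unique (1 + replicateRow Unit w * A⁻¹ * replicateCol Unit v), add_apply,
          one_apply_eq, ← replicateRow_vecMul, replicateRow_mul_replicateCol_apply,
          ← dotProduct_mulVec]
    _ = A.det * (μ + w ⬝ᵥ (μ • A⁻¹ *ᵥ v)) := by rw [dotProduct_smul, smul_eq_mul]; ring
    _ = A.det * (μ + w ⬝ᵥ v) := by rw [hAinv]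

theorem det_add_vecMulVec_mul_of_det_ne_zero [IsDomain R] {A : Matrix n n R} (hA : A.det ≠ 0)
    {v : n → R} {μ : R} (hv : A *ᵥ v = μ • v) (w : n → R) :
    (A + vecMulVec v w).det * μ = A.det * (μ + w ⬝ᵥ v) := by
  let f := algebraMap R (FractionRing R)
  have hf : Function.Injective f := IsFractionRing.injective R (FractionRing R)
  have hdet (M : Matrix n n R) : f M.det = (M.map f).det := f.map_det M
  have hmap : (vecMulVec v w).map f = vecMulVec (f ∘ v) (f ∘ w) := by
    ext i j
    simp [vecMulVec_apply]
  apply hf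
  rw [map_mul, map_mul, map_add, hdet, hdet, Matrix.map_add f (map_add f), hmap,
    RingHom.map_dotProduct]
  refine det_add_vecMulVec_mul_of_isUnit_det ?_ ?_ (f ∘ w)
  · rwa [← hdet, isUnit_iff_ne_zero, ne_eq, map_eq_zero_iff f hf]
  · ext i
    rw [← RingHom.map_mulVec, hv]
    simp

theorem charmatrix_mulVec_of_mulVec_eq_smul {T : Matrix n n R} {v : n → R} {lam : R}
    (hv : T *ᵥ v = lam • v) : charmatrix T *ᵥ (C ∘ v) = (X - C lam) • (C ∘ v) := by
  funext i
  simp only [charmatrix, sub_mulVec, Pi.sub_apply, RingHom.mapMatrix_apply,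
    ← RingHom.map_mulVec, hv, scalar_apply, mulVec_diagonal, Pi.smul_apply, smul_eq_mul,
    Function.comp_apply, map_mul]
  ring

theorem charmatrix_add_vecMulVec (T : Matrix n n R) (v w : n → R) :
    charmatrix (T + vecMulVec v w) = charmatrix T - vecMulVec (C ∘ v) (C ∘ w) := by
  ext i j : 1
  simp only [charmatrix_apply, add_apply, vecMulVec_apply, sub_apply, map_add, map_mul,
    Function.comp_apply]
  ring

theorem charpoly_add_vecMulVec_mul_X_sub_C [IsDomain R] {T : Matrix n n R} {v : n → R}
    {lam : R} (hv : T *ᵥ v = lam • v) (w : n → R) :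
    (T + vecMulVec v w).charpoly * (X - C lam) = T.charpoly * (X - C (lam + w ⬝ᵥ v)) := by
  have h := det_add_vecMulVec_mul_of_det_ne_zero T.charpoly_monic.ne_zero
    (charmatrix_mulVec_of_mulVec_eq_smul hv) (-(C ∘ w))
  rw [vecMulVec_neg, ← sub_eq_add_neg, ← charmatrix_add_vecMulVec, neg_dotProduct,
    ← RingHom.map_dotProduct] at h
  rw [charpoly, h, charpoly, C_add]
  ring

end Matrix

theorem brauer_rank_one_shift_general {n : ℕ} (T : Matrix (Fin n) (Fin n) ℂ)
    (v u : Fin n → ℂ) (lam s : ℂ)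
    (heig : T.mulVec v = lam • v)
    (huv : dotProduct (star u) v = 1) :
    (T + s • Matrix.vecMulVec v (star u)).charpoly * (X - C lam) =
      T.charpoly * (X - C (lam + s)) := by
  have hsv : T *ᵥ (s • v) = lam • (s • v) := by rw [mulVec_smul, heig, smul_comm]
  have h := charpoly_add_vecMulVec_mul_X_sub_C hsv (star u)
  rwa [smul_vecMulVec, dotProduct_smul, huv, smul_eq_mul, mul_one] at h

/-- **Brauer's theorem.** If `(λ, v)` is an eigenpair of `T` and `u* v = 1`, then the
eigenvalues of `T + s v u*` are those of `T` with one occurrence of `λ` replaced by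
`λ + s`; equivalently, the characteristic polynomials satisfy
`charpoly(T + s v u*) * (x - λ) = charpoly(T) * (x - (λ + s))`. -/
theorem brauer_rank_one_shift {n : ℕ} (T : Matrix (Fin n) (Fin n) ℂ)
    (v u : Fin n → ℂ) (lam s : ℂ)
    (hv : v ≠ 0) (heig : T.mulVec v = lam • v)
    (huv : dotProduct (star u) v = 1) :
    (T + s • Matrix.vecMulVec v (star u)).charpoly * (X - C lam) =
      T.charpoly * (X - C (lam + s)) :=
  brauer_rank_one_shift_general T v u lam s heig huv
end

section
/- For square matrices M, N and invertible T₁, T₂ of the matching sizes, sep(M,N) ≤ sep(T₁ M T₁⁻¹, T₂ N T₂⁻¹) · κ(T₁) · κ(T₂), where κ(T) = ‖T‖·‖T⁻¹‖ is the condition number. -/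
/-!
If `X = T₁⁻¹ Y T₂`, then `M X - X N = T₁⁻¹ (A Y - Y B) T₂` with `A = T₁ M T₁⁻¹`, `B = T₂ N T₂⁻¹`,
and `Y = T₁ X T₂⁻¹`. Submultiplicativity of the Frobenius norm bounds the Sylvester quotient of
`X` for `(M, N)` by `κ(T₁) κ(T₂)` times that of `Y` for `(A, B)`; taking the infimum over `Y`
gives the claim.
-/

attribute [local instance] Matrix.frobeniusNormedAddCommGroup

/-- The separation of `M` and `N` in the Frobenius norm. -/
noncomputable def sepF {k l : Type*} [Fintype k] [Fintype l]
    (M : Matrix k k ℂ) (N : Matrix l l ℂ) : ℝ :=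
  sInf ((fun X : Matrix k l ℂ => ‖M * X - X * N‖ / ‖X‖) '' {X | X ≠ 0})

namespace Matrix

variable {k l : Type*} [Fintype k] [Fintype l]

theorem frobenius_norm_mul_mul_le {m n : Type*} [Fintype m] [Fintype n]
    (P : Matrix k m ℂ) (Z : Matrix m n ℂ) (Q : Matrix n l ℂ) :
    ‖P * Z * Q‖ ≤ ‖P‖ * ‖Z‖ * ‖Q‖ :=
  (frobenius_norm_mul _ _).trans <| by gcongr; exact frobenius_norm_mul _ _

theorem sepF_le_quotient (M : Matrix k k ℂ) (N : Matrix l l ℂ) {X : Matrix k l ℂ}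
    (hX : X ≠ 0) : sepF M N ≤ ‖M * X - X * N‖ / ‖X‖ :=
  csInf_le ⟨0, by rintro _ ⟨X, -, rfl⟩; positivity⟩ ⟨X, hX, rfl⟩

theorem sepF_le_mul_sepF (M A : Matrix k k ℂ) (N B : Matrix l l ℂ) {c : ℝ} (hc : 0 ≤ c)
    (h : ∀ Y : Matrix k l ℂ, Y ≠ 0 → sepF M N ≤ c * (‖A * Y - Y * B‖ / ‖Y‖)) :
    sepF M N ≤ c * sepF A B := by
  by_cases hne : ∃ Y : Matrix k l ℂ, Y ≠ 0
  · obtain ⟨Y₀, hY₀⟩ := hne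
    unfold sepF at h ⊢
    rw [← smul_eq_mul, ← Real.sInf_smul_of_nonneg hc]
    refine le_csInf ((Set.nonempty_of_mem (Set.mem_image_of_mem _ hY₀)).smul_set) ?_
    rintro _ ⟨_, ⟨Y, hY, rfl⟩, rfl⟩
    exact h Y hY
  · -- both sides are `sInf ∅`, which is `0` in `ℝ`
    have hempty : {X : Matrix k l ℂ | X ≠ 0} = ∅ := by
      simpa [Set.eq_empty_iff_forall_notMem] using hne
    simp [sepF, hempty]

variable [DecidableEq k] [DecidableEq l]

theorem conj_nonsing_inv_conj_cancel (T₁ : Matrix k k ℂ) (T₂ : Matrix l l ℂ)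
    (hT₁ : IsUnit T₁.det) (hT₂ : IsUnit T₂.det) (Y : Matrix k l ℂ) :
    T₁ * (T₁⁻¹ * Y * T₂) * T₂⁻¹ = Y := by
  rw [← Matrix.mul_assoc, mul_nonsing_inv_cancel_left _ _ hT₁,
    mul_nonsing_inv_cancel_right _ _ hT₂]

theorem nonsing_inv_conj_ne_zero {T₁ : Matrix k k ℂ} {T₂ : Matrix l l ℂ}
    (hT₁ : IsUnit T₁.det) (hT₂ : IsUnit T₂.det) {Y : Matrix k l ℂ} (hY : Y ≠ 0) :
    T₁⁻¹ * Y * T₂ ≠ 0 := fun hX ↦ hY <| by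
  simpa [hX] using (conj_nonsing_inv_conj_cancel T₁ T₂ hT₁ hT₂ Y).symm

theorem sylvester_nonsing_inv_conj (M T₁ : Matrix k k ℂ) (N T₂ : Matrix l l ℂ)
    (hT₁ : IsUnit T₁.det) (hT₂ : IsUnit T₂.det) (Y : Matrix k l ℂ) :
    M * (T₁⁻¹ * Y * T₂) - (T₁⁻¹ * Y * T₂) * N =
      T₁⁻¹ * (T₁ * M * T₁⁻¹ * Y - Y * (T₂ * N * T₂⁻¹)) * T₂ := by
  simp only [Matrix.mul_sub, Matrix.sub_mul, Matrix.mul_assoc, nonsing_inv_mul T₂ hT₂,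
    Matrix.mul_one, nonsing_inv_mul_cancel_left _ _ hT₁]

theorem quotient_le_mul_quotient_conj (M T₁ : Matrix k k ℂ) (N T₂ : Matrix l l ℂ)
    (hT₁ : IsUnit T₁.det) (hT₂ : IsUnit T₂.det) {Y : Matrix k l ℂ} (hY : Y ≠ 0) :
    ‖M * (T₁⁻¹ * Y * T₂) - (T₁⁻¹ * Y * T₂) * N‖ / ‖T₁⁻¹ * Y * T₂‖ ≤
      (‖T₁‖ * ‖T₁⁻¹‖) * (‖T₂‖ * ‖T₂⁻¹‖) *
        (‖T₁ * M * T₁⁻¹ * Y - Y * (T₂ * N * T₂⁻¹)‖ / ‖Y‖) := by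
  set X := T₁⁻¹ * Y * T₂
  set D := T₁ * M * T₁⁻¹ * Y - Y * (T₂ * N * T₂⁻¹)
  have hXY : T₁ * X * T₂⁻¹ = Y := conj_nonsing_inv_conj_cancel T₁ T₂ hT₁ hT₂ Y
  have hD : ‖M * X - X * N‖ ≤ ‖T₁⁻¹‖ * ‖D‖ * ‖T₂‖ := by
    rw [sylvester_nonsing_inv_conj M T₁ N T₂ hT₁ hT₂]
    exact frobenius_norm_mul_mul_le _ _ _
  have hY_le : ‖Y‖ ≤ ‖T₁‖ * ‖X‖ * ‖T₂⁻¹‖ := hXY ▸ frobenius_norm_mul_mul_le _ _ _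
  have hY_pos : 0 < ‖Y‖ := norm_pos_iff.mpr hY
  have hX_pos : 0 < ‖X‖ := norm_pos_iff.mpr (nonsing_inv_conj_ne_zero hT₁ hT₂ hY)
  rw [div_le_iff₀ hX_pos]
  calc ‖M * X - X * N‖ ≤ ‖T₁⁻¹‖ * ‖D‖ * ‖T₂‖ := hD
    _ ≤ ‖T₁⁻¹‖ * ‖D‖ * ‖T₂‖ * ((‖T₁‖ * ‖X‖ * ‖T₂⁻¹‖) / ‖Y‖) := by
      refine le_mul_of_one_le_right (by positivity) ?_
      rwa [one_le_div hY_pos]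
    _ = (‖T₁‖ * ‖T₁⁻¹‖) * (‖T₂‖ * ‖T₂⁻¹‖) * (‖D‖ / ‖Y‖) * ‖X‖ := by ring

theorem sepF_le_condition_mul_sepF_conj (M T₁ : Matrix k k ℂ) (N T₂ : Matrix l l ℂ)
    (hT₁ : IsUnit T₁.det) (hT₂ : IsUnit T₂.det) :
    sepF M N ≤ (‖T₁‖ * ‖T₁⁻¹‖) * (‖T₂‖ * ‖T₂⁻¹‖) * sepF (T₁ * M * T₁⁻¹) (T₂ * N * T₂⁻¹) :=
  sepF_le_mul_sepF _ _ _ _ (by positivity) fun Y hY ↦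
    (sepF_le_quotient M N (nonsing_inv_conj_ne_zero hT₁ hT₂ hY)).trans
      (quotient_le_mul_quotient_conj M T₁ N T₂ hT₁ hT₂ hY)

end Matrix

/-- `sep(M,N) ≤ sep(T₁ M T₁⁻¹, T₂ N T₂⁻¹) κ(T₁) κ(T₂)` where `κ(T) = ‖T‖ ‖T⁻¹‖`. -/
theorem sepF_similarity {p q : ℕ}
    (M T₁ : Matrix (Fin p) (Fin p) ℂ) (N T₂ : Matrix (Fin q) (Fin q) ℂ)
    (hT₁ : IsUnit T₁.det) (hT₂ : IsUnit T₂.det) :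
    sepF M N ≤ sepF (T₁ * M * T₁⁻¹) (T₂ * N * T₂⁻¹) *
      (‖T₁‖ * ‖T₁⁻¹‖) * (‖T₂‖ * ‖T₂⁻¹‖) := by
  rw [mul_assoc, mul_comm]
  exact Matrix.sepF_le_condition_mul_sepF_conj M T₁ N T₂ hT₁ hT₂
end

section
/- Let W = span of the columns of [I; X] and W̃ = span of the columns of [I; X̃], where X, X̃ ∈ ℂ^{m×n}. Then ‖X − X̃‖ ≤ (‖Iₙ‖² + ‖X‖²)^{1/2} (‖Iₙ‖² + ‖X̃‖²)^{1/2} · dist(W, W̃), where dist(U,V) = ‖P_U − P_V‖ is the distance between subspaces measured via orthogonal projections, for both the spectral and Frobenius norms. -/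
open Matrix
/-- The Frobenius norm of a matrix. -/
noncomputable def frobNorm {a b : Type*} [Fintype a] [Fintype b]
    (A : Matrix a b ℂ) : ℝ :=
  @norm _ (Matrix.frobeniusNormedAddCommGroup).toNorm A

/-- The spectral norm (ℓ²-operator norm) of a matrix. -/
noncomputable def specNorm {a b : Type*} [Fintype a] [Fintype b] [DecidableEq b]
    (A : Matrix a b ℂ) : ℝ :=
  @norm _ (Matrix.instL2OpNormedAddCommGroup).toNorm A

/-!
`K = [-X̃, I]` annihilates `W̃`, so `K P̃ = 0`, while `P Y = Y` for `Y = [I; X]`. Hence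
`X - X̃ = K Y = K (P - P̃) Y`, and the bound follows from submultiplicativity (in the Frobenius case
in the mixed form `‖A B‖_F ≤ ‖A‖₂ ‖B‖_F`) together with `‖[A; B]‖² ≤ ‖A‖² + ‖B‖²`, applied to `Y`
and to `Kᴴ`.
-/

namespace Matrix

variable {R : Type*} {l m n : Type*}

theorem conjTranspose_fromRows_mul_fromRows [Fintype l] [Fintype m] [Semiring R] [StarRing R]
    (A : Matrix m n R) (B : Matrix l n R) :
    (fromRows A B)ᴴ * fromRows A B = Aᴴ * A + Bᴴ * B := by
  rw [conjTranspose_fromRows_eq_fromCols_conjTranspose, fromCols_mul_fromRows]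

theorem fromCols_neg_one_mul_fromRows_one [Fintype m] [Fintype n] [Ring R]
    [DecidableEq m] [DecidableEq n] (X X' : Matrix m n R) :
    fromCols (-X') (1 : Matrix m m R) * fromRows (1 : Matrix n n R) X = X - X' := by
  rw [fromCols_mul_fromRows, Matrix.mul_one, Matrix.one_mul, neg_add_eq_sub]

/-- `P_W` for `W` the column space of `Y`; an orthogonal projection when `Yᴴ * Y` is invertible. -/
noncomputable def colProj [Fintype m] [Fintype n] [CommRing R] [StarRing R] [DecidableEq n]
    (Y : Matrix m n R) : Matrix m m R :=
  Y * (Yᴴ * Y)⁻¹ * Yᴴ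

theorem colProj_mul_self [Fintype m] [Fintype n] [CommRing R] [StarRing R] [DecidableEq n]
    {Y : Matrix m n R} (hY : IsUnit (Yᴴ * Y)) : colProj Y * Y = Y := by
  rw [colProj, Matrix.mul_assoc, Matrix.mul_assoc,
    nonsing_inv_mul _ ((isUnit_iff_isUnit_det _).mp hY), Matrix.mul_one]

theorem mul_colProj_eq_zero [Fintype m] [Fintype n] [CommRing R] [StarRing R] [DecidableEq n]
    {K : Matrix l m R} {Y : Matrix m n R} (hKY : K * Y = 0) : K * colProj Y = 0 := by
  rw [colProj, ← Matrix.mul_assoc, ← Matrix.mul_assoc, hKY, Matrix.zero_mul, Matrix.zero_mul]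

open scoped ComplexOrder in
theorem isUnit_conjTranspose_mul_self_fromRows_one [Fintype m] [Fintype n] {𝕜 : Type*} [RCLike 𝕜]
    [DecidableEq n] (X : Matrix m n 𝕜) :
    IsUnit ((fromRows (1 : Matrix n n 𝕜) X)ᴴ * fromRows (1 : Matrix n n 𝕜) X) := by
  rw [conjTranspose_fromRows_mul_fromRows, conjTranspose_one, Matrix.one_mul]
  exact (PosDef.one.add_posSemidef (posSemidef_conjTranspose_mul_self X)).isUnit

theorem fromCols_neg_one_mul_colProj_sub_mul_fromRows_one [Fintype m] [Fintype n] {𝕜 : Type*}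
    [RCLike 𝕜] [DecidableEq m] [DecidableEq n] (X X' : Matrix m n 𝕜) :
    fromCols (-X') (1 : Matrix m m 𝕜) *
        (colProj (fromRows (1 : Matrix n n 𝕜) X) - colProj (fromRows (1 : Matrix n n 𝕜) X')) *
        fromRows (1 : Matrix n n 𝕜) X = X - X' := by
  have hK : fromCols (-X') (1 : Matrix m m 𝕜) * colProj (fromRows (1 : Matrix n n 𝕜) X') = 0 :=
    mul_colProj_eq_zero (by rw [fromCols_neg_one_mul_fromRows_one, sub_self])
  rw [Matrix.mul_sub, hK, sub_zero, Matrix.mul_assoc,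
    colProj_mul_self (isUnit_conjTranspose_mul_self_fromRows_one X),
    fromCols_neg_one_mul_fromRows_one]

end Matrix

section SpecNorm

open scoped Matrix.Norms.L2Operator

variable {k l m n : Type*} [Fintype k] [Fintype l] [Fintype m] [Fintype n] [DecidableEq n]

theorem specNorm_nonneg (A : Matrix m n ℂ) : 0 ≤ specNorm A :=
  norm_nonneg A

theorem specNorm_zero : specNorm (0 : Matrix m n ℂ) = 0 :=
  norm_zero

theorem specNorm_mul_le [DecidableEq m] (A : Matrix l m ℂ) (B : Matrix m n ℂ) :
    specNorm (A * B) ≤ specNorm A * specNorm B :=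
  l2_opNorm_mul A B

theorem specNorm_mul_mul_le [DecidableEq l] [DecidableEq m] (A : Matrix k l ℂ)
    (B : Matrix l m ℂ) (C : Matrix m n ℂ) :
    specNorm (A * B * C) ≤ specNorm A * specNorm B * specNorm C :=
  (specNorm_mul_le _ _).trans
    (mul_le_mul_of_nonneg_right (specNorm_mul_le _ _) (specNorm_nonneg _))

theorem specNorm_conjTranspose [DecidableEq m] (A : Matrix m n ℂ) :
    specNorm Aᴴ = specNorm A :=
  l2_opNorm_conjTranspose A

theorem specNorm_sq (A : Matrix m n ℂ) : specNorm A ^ 2 = specNorm (Aᴴ * A) :=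
  (sq _).trans (l2_opNorm_conjTranspose_mul_self A).symm

theorem specNorm_one [Nonempty n] : specNorm (1 : Matrix n n ℂ) = 1 :=
  CStarRing.norm_one

theorem specNorm_one_le : specNorm (1 : Matrix n n ℂ) ≤ 1 := by
  rcases isEmpty_or_nonempty n with hn | hn
  · rw [Subsingleton.elim (1 : Matrix n n ℂ) 0, specNorm_zero]
    exact zero_le_one
  · exact specNorm_one.le

theorem specNorm_fromRows_sq_le (A : Matrix m n ℂ) (B : Matrix l n ℂ) :
    specNorm (fromRows A B) ^ 2 ≤ specNorm A ^ 2 + specNorm B ^ 2 := by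
  rw [specNorm_sq, specNorm_sq, specNorm_sq, conjTranspose_fromRows_mul_fromRows]
  exact norm_add_le _ _

theorem specNorm_fromCols_sq_le [DecidableEq m] [DecidableEq l] (A : Matrix m n ℂ)
    (B : Matrix m l ℂ) : specNorm (fromCols A B) ^ 2 ≤ specNorm A ^ 2 + specNorm B ^ 2 := by
  rw [← specNorm_conjTranspose, conjTranspose_fromCols_eq_fromRows_conjTranspose,
    ← specNorm_conjTranspose A, ← specNorm_conjTranspose B]
  exact specNorm_fromRows_sq_le _ _

theorem norm_mulVec_le_specNorm_mul (A : Matrix m n ℂ) (x : EuclideanSpace ℂ n) :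
    ‖WithLp.toLp 2 (A *ᵥ x)‖ ≤ specNorm A * ‖x‖ :=
  l2_opNorm_mulVec A x

theorem specNorm_fromCols_neg_one_sq_le [DecidableEq m] (X : Matrix m n ℂ) :
    specNorm (fromCols (-X) (1 : Matrix m m ℂ)) ^ 2 ≤ 1 + specNorm X ^ 2 := by
  have hneg : specNorm (-X) = specNorm X := norm_neg (E := Matrix m n ℂ) X
  calc specNorm (fromCols (-X) (1 : Matrix m m ℂ)) ^ 2
      ≤ specNorm (-X) ^ 2 + specNorm (1 : Matrix m m ℂ) ^ 2 := specNorm_fromCols_sq_le _ _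
    _ ≤ specNorm X ^ 2 + 1 := by
      rw [hneg]; gcongr; exact pow_le_one₀ (specNorm_nonneg _) specNorm_one_le
    _ = 1 + specNorm X ^ 2 := add_comm _ _

end SpecNorm

section FrobNorm

attribute [local instance] Matrix.frobeniusNormedAddCommGroup

variable {k l m n : Type*} [Fintype k] [Fintype l] [Fintype m] [Fintype n]

theorem frobNorm_nonneg (A : Matrix m n ℂ) : 0 ≤ frobNorm A :=
  norm_nonneg A

theorem frobNorm_zero : frobNorm (0 : Matrix m n ℂ) = 0 :=
  norm_zero

theorem frobNorm_sq (A : Matrix m n ℂ) : frobNorm A ^ 2 = ∑ i, ∑ j, ‖A i j‖ ^ 2 := by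
  rw [frobNorm, frobenius_norm_def, ← Real.sqrt_eq_rpow, Real.sq_sqrt (by positivity)]
  simp only [Real.rpow_two]

theorem frobNorm_sq_eq_sum_col (A : Matrix m n ℂ) :
    frobNorm A ^ 2 = ∑ j, ‖WithLp.toLp 2 (fun i => A i j)‖ ^ 2 := by
  simp only [frobNorm_sq, EuclideanSpace.norm_sq_eq]
  exact Finset.sum_comm

theorem frobNorm_fromRows_sq (A : Matrix m n ℂ) (B : Matrix l n ℂ) :
    frobNorm (fromRows A B) ^ 2 = frobNorm A ^ 2 + frobNorm B ^ 2 := by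
  simp only [frobNorm_sq, Fintype.sum_sum_type, fromRows_apply_inl, fromRows_apply_inr]

theorem frobNorm_mul_le (A : Matrix l m ℂ) (B : Matrix m n ℂ) :
    frobNorm (A * B) ≤ frobNorm A * frobNorm B :=
  frobenius_norm_mul A B

theorem frobNorm_one_sq [DecidableEq n] :
    frobNorm (1 : Matrix n n ℂ) ^ 2 = Fintype.card n := by
  simp [frobNorm_sq, one_apply, apply_ite]

theorem frobNorm_mul_le_specNorm_mul [DecidableEq m] (A : Matrix l m ℂ) (B : Matrix m n ℂ) :
    frobNorm (A * B) ≤ specNorm A * frobNorm B := by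
  have hcol (j : n) : ‖WithLp.toLp 2 (fun i => (A * B) i j)‖ ≤
      specNorm A * ‖WithLp.toLp 2 (fun k => B k j)‖ :=
    norm_mulVec_le_specNorm_mul A (WithLp.toLp 2 fun k => B k j)
  rw [← pow_le_pow_iff_left₀ (frobNorm_nonneg _)
    (mul_nonneg (specNorm_nonneg A) (frobNorm_nonneg B)) two_ne_zero,
    mul_pow, frobNorm_sq_eq_sum_col, frobNorm_sq_eq_sum_col, Finset.mul_sum]
  gcongr with j
  rw [← mul_pow]
  exact pow_le_pow_left₀ (norm_nonneg _) (hcol j) 2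

theorem frobNorm_mul_mul_le [DecidableEq l] (A : Matrix k l ℂ) (B : Matrix l m ℂ)
    (C : Matrix m n ℂ) : frobNorm (A * B * C) ≤ specNorm A * frobNorm B * frobNorm C := by
  rw [Matrix.mul_assoc, mul_assoc]
  exact (frobNorm_mul_le_specNorm_mul _ _).trans
    (mul_le_mul_of_nonneg_left (frobNorm_mul_le _ _) (specNorm_nonneg _))

theorem specNorm_le_frobNorm [DecidableEq n] (A : Matrix m n ℂ) : specNorm A ≤ frobNorm A := by
  refine ContinuousLinearMap.opNorm_le_bound _ (frobNorm_nonneg A) fun x => ?_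
  calc ‖WithLp.toLp 2 (A *ᵥ x)‖ = frobNorm (A * replicateCol Unit x) := by
        rw [← replicateCol_mulVec]; exact (frobenius_norm_replicateCol _).symm
    _ ≤ frobNorm A * frobNorm (replicateCol Unit x) := frobNorm_mul_le _ _
    _ = frobNorm A * ‖x‖ := congrArg (frobNorm A * ·) (frobenius_norm_replicateCol _)

theorem one_add_specNorm_sq_le_frobNorm_one_sq_add [DecidableEq n] [Nonempty n]
    (A : Matrix m n ℂ) :
    1 + specNorm A ^ 2 ≤ frobNorm (1 : Matrix n n ℂ) ^ 2 + frobNorm A ^ 2 := by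
  have hcard : (1 : ℝ) ≤ frobNorm (1 : Matrix n n ℂ) ^ 2 := by
    rw [frobNorm_one_sq]; exact_mod_cast Fintype.card_pos
  have := pow_le_pow_left₀ (specNorm_nonneg A) (specNorm_le_frobNorm A) 2
  linarith

end FrobNorm

/-- If `W` and `W̃` are the column spaces of `[I; X]` and `[I; X̃]`, with orthogonal
projections `P_W = Y (Y* Y)⁻¹ Y*` (`Y = [I; X]`), then
`‖X - X̃‖ ≤ (‖I‖² + ‖X‖²)^½ (‖I‖² + ‖X̃‖²)^½ ‖P_W - P_W̃‖`, for both the spectral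
and the Frobenius norm. -/
theorem dist_solutions_le_dist_subspaces {n m : ℕ}
    (X X' : Matrix (Fin m) (Fin n) ℂ)
    (Y Y' : Matrix (Fin n ⊕ Fin m) (Fin n) ℂ)
    (hY : Y = Matrix.fromRows (1 : Matrix (Fin n) (Fin n) ℂ) X)
    (hY' : Y' = Matrix.fromRows (1 : Matrix (Fin n) (Fin n) ℂ) X')
    (P P' : Matrix (Fin n ⊕ Fin m) (Fin n ⊕ Fin m) ℂ)
    (hP : P = Y * (Yᴴ * Y)⁻¹ * Yᴴ) (hP' : P' = Y' * (Matrix.conjTranspose Y' * Y')⁻¹ * Matrix.conjTranspose Y') :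
    specNorm (X - X') ≤
      Real.sqrt (specNorm (1 : Matrix (Fin n) (Fin n) ℂ) ^ 2 + specNorm X ^ 2) *
      Real.sqrt (specNorm (1 : Matrix (Fin n) (Fin n) ℂ) ^ 2 + specNorm X' ^ 2) *
        specNorm (P - P') ∧
    frobNorm (X - X') ≤
      Real.sqrt (frobNorm (1 : Matrix (Fin n) (Fin n) ℂ) ^ 2 + frobNorm X ^ 2) *
      Real.sqrt (frobNorm (1 : Matrix (Fin n) (Fin n) ℂ) ^ 2 + frobNorm X' ^ 2) *
        frobNorm (P - P') := by
  obtain rfl : P = colProj Y := hP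
  obtain rfl : P' = colProj Y' := hP'
  subst hY hY'
  rcases isEmpty_or_nonempty (Fin n) with hn | hn
  · rw [Subsingleton.elim (X - X') 0, specNorm_zero, frobNorm_zero]
    exact ⟨mul_nonneg (by positivity) (specNorm_nonneg _),
      mul_nonneg (by positivity) (frobNorm_nonneg _)⟩
  have hkey := fromCols_neg_one_mul_colProj_sub_mul_fromRows_one X X'
  set K := fromCols (-X') (1 : Matrix (Fin m) (Fin m) ℂ)
  set Y := fromRows (1 : Matrix (Fin n) (Fin n) ℂ) X
  set D := colProj Y - colProj (fromRows (1 : Matrix (Fin n) (Fin n) ℂ) X')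
  set I := (1 : Matrix (Fin n) (Fin n) ℂ)
  have hK : specNorm K ≤ √(1 + specNorm X' ^ 2) :=
    Real.le_sqrt_of_sq_le (specNorm_fromCols_neg_one_sq_le X')
  have hY : specNorm Y ≤ √(specNorm I ^ 2 + specNorm X ^ 2) :=
    Real.le_sqrt_of_sq_le (specNorm_fromRows_sq_le I X)
  have hKF : specNorm K ≤ √(frobNorm I ^ 2 + frobNorm X' ^ 2) :=
    hK.trans (Real.sqrt_le_sqrt (one_add_specNorm_sq_le_frobNorm_one_sq_add X'))
  have hYF : frobNorm Y ≤ √(frobNorm I ^ 2 + frobNorm X ^ 2) :=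
    Real.le_sqrt_of_sq_le (frobNorm_fromRows_sq I X).le
  rw [specNorm_one, one_pow] at hY ⊢
  rw [← hkey]
  constructor
  · calc specNorm (K * D * Y) ≤ specNorm K * specNorm D * specNorm Y := specNorm_mul_mul_le _ _ _
      _ ≤ √(1 + specNorm X' ^ 2) * specNorm D * √(1 + specNorm X ^ 2) :=
        mul_le_mul (mul_le_mul_of_nonneg_right hK (specNorm_nonneg D)) hY (specNorm_nonneg Y)
          (mul_nonneg (Real.sqrt_nonneg _) (specNorm_nonneg D))
      _ = _ := by ring
  · calc frobNorm (K * D * Y) ≤ specNorm K * frobNorm D * frobNorm Y := frobNorm_mul_mul_le _ _ _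
      _ ≤ √(frobNorm I ^ 2 + frobNorm X' ^ 2) * frobNorm D *
            √(frobNorm I ^ 2 + frobNorm X ^ 2) :=
        mul_le_mul (mul_le_mul_of_nonneg_right hKF (frobNorm_nonneg D)) hYF (frobNorm_nonneg Y)
          (mul_nonneg (Real.sqrt_nonneg _) (frobNorm_nonneg D))
      _ = _ := by ring
end

section
/- Let H ∈ ℂ^{(n+m)×(n+m)} have spectrum the disjoint union of Λ₁ = {ξ₁,…,ξ_k} and Λ₂ = {ξ_{k+1},…,ξ_{n+m}}. Let V, U ∈ ℂ^{(n+m)×k} have orthonormal columns spanning the right and left invariant subspaces of H associated with Λ₁, respectively, and let s be a scalar. Then the matrix Ĥ = H(I + s V (U*V)⁻¹ U*) satisfies: (a) every right invariant subspace of H is a right invariant subspace of Ĥ; (b) the eigenvalues of Ĥ are {(1+s)ξ₁, …, (1+s)ξ_k, ξ_{k+1}, …, ξ_{n+m}} (counted with multiplicity). -/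
/-!
Write `W₁`, `W₂` for the sums of the generalized eigenspaces of `H` for eigenvalues in and
outside `Λ₁`; they are complementary and `H`-invariant. A left generalized eigenvector for `λ` is
orthogonal to every right generalized eigenvector for `μ ≠ λ`, since the latter lies in the range
of every power of `H - λ`. So `Uᴴ` kills `W₂`, while `P = V (UᴴV)⁻¹ Uᴴ` fixes `W₁ = range V`:
`P` is the spectral projector onto `W₁` along `W₂`, and it acts as the scalar `1` or `0` on each
generalized eigenspace of `H`.

An `H`-invariant subspace is the sum of its intersections with the generalized eigenspaces of
`H`, so it is invariant under `P`, hence under `H (1 + s P)`. On `W₁` this map is `(1 + s) H` and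
on `W₂` it is `H`; splitting the characteristic polynomial of `H` along `W₁ ⊕ W₂` (the factor for
`W₁` has exactly the roots in `Λ₁`) gives that of `H (1 + s P)`.
-/

open Matrix Polynomial Module

namespace Polynomial

theorem eq_prod_filter_of_mul_eq_prod {K ι : Type*} [Field K] {p q : K[X]} (hp : p.Monic)
    (hq : q.Monic) {t : Finset ι} {ξ : ι → K} (hpq : p * q = ∏ i ∈ t, (X - C (ξ i)))
    {S : Set K} [DecidablePred (· ∈ S)] (hpS : ∀ a ∈ p.roots, a ∈ S)
    (hqS : ∀ a ∈ q.roots, a ∉ S) :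
    p = ∏ i ∈ t with ξ i ∈ S, (X - C (ξ i)) := by
  have hsplit : p.Splits := by
    refine Splits.of_dvd ?_ (hp.mul hq).ne_zero (dvd_mul_right p q)
    rw [hpq]
    exact Splits.prod fun i _ => Splits.X_sub_C (ξ i)
  have hroots : p.roots + q.roots = t.val.map ξ := by
    rw [← roots_mul (hp.mul hq).ne_zero, hpq, Finset.prod_eq_multiset_prod,
      show (fun i => X - C (ξ i)) = (fun a => X - C a) ∘ ξ from rfl, ← Multiset.map_map,
      roots_multiset_prod_X_sub_C]
  have hfilter : p.roots = (t.val.map ξ).filter (· ∈ S) := by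
    rw [← hroots, Multiset.filter_add, Multiset.filter_eq_self.mpr hpS,
      Multiset.filter_eq_nil.mpr hqS, add_zero]
  rw [hsplit.eq_prod_roots_of_monic hp, hfilter, Multiset.filter_map, Multiset.map_map,
    Finset.prod_eq_multiset_prod, Finset.filter_val]
  rfl

end Polynomial

namespace LinearMap

variable {K V : Type*} [Field K] [AddCommGroup V] [Module K V] [FiniteDimensional K V]

theorem charpoly_eq_mul_of_isCompl (f : End K V) {p q : Submodule K V} (h : IsCompl p q)
    (hp : ∀ x ∈ p, f x ∈ p) (hq : ∀ x ∈ q, f x ∈ q) :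
    f.charpoly = (f.restrict hp).charpoly * (f.restrict hq).charpoly := by
  have hconj : (p.prodEquivOfIsCompl q h).conj ((f.restrict hp).prodMap (f.restrict hq)) = f := by
    ext x
    obtain ⟨⟨y, z⟩, rfl⟩ := (p.prodEquivOfIsCompl q h).surjective x
    simp [LinearEquiv.conj_apply]
  rw [← charpoly_prodMap, ← LinearEquiv.charpoly_conj (p.prodEquivOfIsCompl q h), hconj]

theorem charpoly_eq_smul_restrict_mul_restrict (f : End K V) {g : End K V}
    {p q : Submodule K V} (h : IsCompl p q) (hp : ∀ x ∈ p, f x ∈ p) (hq : ∀ x ∈ q, f x ∈ q)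
    (c : K) (hgp : ∀ x ∈ p, g x = c • f x) (hgq : ∀ x ∈ q, g x = f x) :
    g.charpoly = (c • f.restrict hp).charpoly * (f.restrict hq).charpoly := by
  have hgp' : ∀ x ∈ p, g x ∈ p := fun x hx => hgp x hx ▸ p.smul_mem c (hp x hx)
  have hgq' : ∀ x ∈ q, g x ∈ q := fun x hx => hgq x hx ▸ hq x hx
  rw [g.charpoly_eq_mul_of_isCompl h hgp' hgq']
  congr 2 <;> ext x
  · exact hgp x x.2
  · exact hgq x x.2

theorem charpoly_smul_of_eq_prod [Infinite K] (f : End K V) {ι : Type*} {t : Finset ι}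
    {ξ : ι → K} (hf : f.charpoly = ∏ i ∈ t, (X - C (ξ i))) (c : K) :
    (c • f).charpoly = ∏ i ∈ t, (X - C (c * ξ i)) := by
  have hcard : t.card = finrank K V := by
    rw [← f.charpoly_natDegree, hf, natDegree_finsetProd_X_sub_C_eq_card]
  rcases eq_or_ne c 0 with rfl | hc
  · simp [hcard]
  refine Polynomial.funext fun x => ?_
  have hscale : algebraMap K (End K V) x - c • f =
      c • (algebraMap K (End K V) (c⁻¹ * x) - f) := by
    rw [smul_sub, Algebra.algebraMap_eq_smul_one, Algebra.algebraMap_eq_smul_one, smul_smul,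
      mul_inv_cancel_left₀ hc]
  rw [eval_charpoly, hscale, det_smul, ← eval_charpoly, hf, eval_prod, eval_prod, ← hcard,
    ← Finset.prod_const, ← Finset.prod_mul_distrib]
  refine Finset.prod_congr rfl fun i _ => ?_
  simp only [eval_sub, eval_X, eval_C]
  field_simp

end LinearMap

namespace Module.End

variable {K V : Type*} [Field K] [AddCommGroup V] [Module K V] (f : End K V)

theorem mapsTo_biSup_maxGenEigenspace (S : Set K) :
    Set.MapsTo f ↑(⨆ μ ∈ S, f.maxGenEigenspace μ) ↑(⨆ μ ∈ S, f.maxGenEigenspace μ) :=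
  iSup₂_le fun μ hμ => (f.genEigenspace_mem_invtSubmodule μ ⊤).trans
    (Submodule.comap_mono (le_iSup₂ (f := fun μ _ => f.maxGenEigenspace μ) μ hμ))

variable [FiniteDimensional K V]

theorem maxGenEigenspace_le_range_pow_sub_smul {μ ν : K} (h : ν ≠ μ) (n : ℕ) :
    f.maxGenEigenspace μ ≤ LinearMap.range ((f - ν • 1) ^ n) := by
  set g := f - ν • 1
  have hg : ∀ x ∈ f.maxGenEigenspace μ, g x ∈ f.maxGenEigenspace μ :=
    mapsTo_maxGenEigenspace_of_comm
      ((Commute.refl f).sub_right ((Commute.one_right f).smul_right ν)) μ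
  have hinj : Function.Injective (g.restrict hg) := by
    rw [← LinearMap.ker_eq_bot, Submodule.eq_bot_iff]
    rintro ⟨y, hy⟩ hgy
    have hyν : y ∈ f.eigenspace ν := by
      rw [mem_eigenspace_iff, ← sub_eq_zero]
      exact congrArg Subtype.val hgy
    simpa using (f.disjoint_genEigenspace h 1 ⊤).le_bot ⟨by simpa using hyν, hy⟩
  intro x hx
  obtain ⟨y, hy⟩ := ((LinearMap.injective_iff_surjective.mp hinj).iterate n) ⟨x, hx⟩
  refine ⟨y, ?_⟩
  rw [← coe_pow, pow_restrict] at hy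
  exact congrArg Subtype.val hy

theorem mem_of_isRoot_charpoly_restrict {p : Submodule K V} (hp : ∀ x ∈ p, f x ∈ p) {S : Set K}
    (hpS : p ≤ ⨆ μ ∈ S, f.maxGenEigenspace μ) {μ : K} (hμ : (f.restrict hp).charpoly.IsRoot μ) :
    μ ∈ S := by
  by_contra hμS
  have hdisj : Disjoint (f.eigenspace μ) p :=
    ((f.independent_maxGenEigenspace.disjoint_biSup hμS).mono_left
      eigenspace_le_maxGenEigenspace).mono_right hpS
  exact (hasEigenvalue_iff_isRoot_charpoly _ μ).mpr hμ (eigenspace_restrict_eq_bot hp hdisj)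

variable [IsAlgClosed K]

theorem isCompl_biSup_maxGenEigenspace (S : Set K) :
    IsCompl (⨆ μ ∈ S, f.maxGenEigenspace μ) (⨆ μ ∈ Sᶜ, f.maxGenEigenspace μ) := by
  refine ⟨f.independent_maxGenEigenspace.disjoint_biSup_biSup disjoint_compl_right, ?_⟩
  rw [codisjoint_iff, ← iSup_union, Set.union_compl_self, iSup_univ,
    iSup_maxGenEigenspace_eq_top]

theorem charpoly_restrict_biSup_maxGenEigenspace {ι : Type*} {t : Finset ι} {ξ : ι → K}
    (hf : f.charpoly = ∏ i ∈ t, (X - C (ξ i))) (S : Set K) [DecidablePred (· ∈ S)] :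
    (f.restrict (f.mapsTo_biSup_maxGenEigenspace S)).charpoly =
      ∏ i ∈ t with ξ i ∈ S, (X - C (ξ i)) := by
  have hroots : ∀ S' : Set K,
      ∀ a ∈ (f.restrict (f.mapsTo_biSup_maxGenEigenspace S')).charpoly.roots, a ∈ S' :=
    fun S' a ha => f.mem_of_isRoot_charpoly_restrict _ le_rfl (isRoot_of_mem_roots ha)
  refine eq_prod_filter_of_mul_eq_prod (LinearMap.charpoly_monic _) (LinearMap.charpoly_monic _)
    ?_ (hroots S) (hroots Sᶜ)
  rw [← hf, f.charpoly_eq_mul_of_isCompl (f.isCompl_biSup_maxGenEigenspace S)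
    (f.mapsTo_biSup_maxGenEigenspace S) (f.mapsTo_biSup_maxGenEigenspace Sᶜ)]

theorem invtSubmodule_le_of_forall_maxGenEigenspace_smul {g : End K V}
    (hg : ∀ μ, ∃ c : K, ∀ x ∈ f.maxGenEigenspace μ, g x = c • x) :
    f.invtSubmodule ≤ g.invtSubmodule := by
  intro p hp
  rw [mem_invtSubmodule]
  conv_lhs => rw [Submodule.eq_iSup_inf_genEigenspace ⊤ hp f.iSup_maxGenEigenspace_eq_top]
  refine iSup_le fun μ x ⟨hxp, hxμ⟩ => ?_
  obtain ⟨c, hc⟩ := hg μ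
  rw [Submodule.mem_comap, hc x hxμ]
  exact p.smul_mem c hxp

section SpectralShift

variable {f} {Q : End K V} {S : Set K}

theorem invtSubmodule_le_mul_one_add_smul (hQS : ∀ μ ∈ S, ∀ x ∈ f.maxGenEigenspace μ, Q x = x)
    (hQSc : ∀ μ ∉ S, ∀ x ∈ f.maxGenEigenspace μ, Q x = 0) (s : K) :
    f.invtSubmodule ≤ (f * (1 + s • Q)).invtSubmodule := by
  have hscalar : ∀ μ, ∃ c : K, ∀ x ∈ f.maxGenEigenspace μ, (1 + s • Q) x = c • x := by
    intro μ
    by_cases hμ : μ ∈ S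
    · exact ⟨1 + s, fun x hx => by simp [hQS μ hμ x hx, add_smul]⟩
    · exact ⟨1, fun x hx => by simp [hQSc μ hμ x hx]⟩
  exact fun p hp x hx => hp (f.invtSubmodule_le_of_forall_maxGenEigenspace_smul hscalar hp hx)

theorem charpoly_mul_one_add_smul (hQS : ∀ μ ∈ S, ∀ x ∈ f.maxGenEigenspace μ, Q x = x)
    (hQSc : ∀ μ ∉ S, ∀ x ∈ f.maxGenEigenspace μ, Q x = 0) (s : K) {ι : Type*} {t : Finset ι}
    {ξ : ι → K} (hf : f.charpoly = ∏ i ∈ t, (X - C (ξ i))) [DecidablePred (· ∈ S)] :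
    (f * (1 + s • Q)).charpoly = ∏ i ∈ t, (X - C (if ξ i ∈ S then (1 + s) * ξ i else ξ i)) := by
  have hQ₁ : ∀ x ∈ ⨆ μ ∈ S, f.maxGenEigenspace μ, Q x = x := fun x hx =>
    (iSup₂_le fun μ hμ y hy => hQS μ hμ y hy : _ ≤ LinearMap.eqLocus Q 1) hx
  have hQ₂ : ∀ x ∈ ⨆ μ ∈ Sᶜ, f.maxGenEigenspace μ, Q x = 0 := fun x hx =>
    (iSup₂_le fun μ hμ y hy => hQSc μ hμ y hy : _ ≤ LinearMap.ker Q) hx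
  rw [LinearMap.charpoly_eq_smul_restrict_mul_restrict f (f.isCompl_biSup_maxGenEigenspace S)
      (f.mapsTo_biSup_maxGenEigenspace S) (f.mapsTo_biSup_maxGenEigenspace Sᶜ) (1 + s)
      (fun x hx => by simp [hQ₁ x hx, add_smul])
      (fun x hx => by simp [hQ₂ x hx]),
    LinearMap.charpoly_smul_of_eq_prod _ (f.charpoly_restrict_biSup_maxGenEigenspace hf S),
    f.charpoly_restrict_biSup_maxGenEigenspace hf Sᶜ]
  simp_rw [Set.mem_compl_iff, ← Finset.prod_ite]
  exact Finset.prod_congr rfl fun i _ => by split_ifs <;> rfl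

end SpectralShift

end Module.End

namespace Matrix

theorem mulVec_mul_nonsing_inv_mul_of_mem_range {n r R : Type*} [Fintype n] [Fintype r]
    [DecidableEq r] [CommRing R] {V : Matrix n r R} {W : Matrix r n R} (h : IsUnit (W * V))
    {x : n → R} (hx : x ∈ LinearMap.range V.mulVecLin) :
    (V * (W * V)⁻¹ * W) *ᵥ x = x := by
  obtain ⟨c, rfl⟩ := hx
  rw [mulVecLin_apply, mulVec_mulVec, Matrix.mul_assoc, Matrix.mul_assoc,
    nonsing_inv_mul _ ((isUnit_iff_isUnit_det _).mp h), Matrix.mul_one]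

variable {n : Type*} [Fintype n] [DecidableEq n]

theorem toLin'_pow_sub_smul {R : Type*} [CommRing R] (A : Matrix n n R) (c : R) (p : ℕ) :
    toLin' ((A - c • 1) ^ p) = (toLin' A - c • 1) ^ p := by
  rw [toLin'_pow, map_sub, map_smul, toLin'_one]
  rfl

variable {K : Type*} [Field K]

theorem star_dotProduct_eq_zero_of_mem_maxGenEigenspace [StarRing K] (H : Matrix n n K)
    {μ ν : K} (h : ν ≠ μ) {u x : n → K} (hu : u ∈ End.maxGenEigenspace (toLin' Hᴴ) (star ν))
    (hx : x ∈ End.maxGenEigenspace (toLin' H) μ) :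
    star u ⬝ᵥ x = 0 := by
  obtain ⟨p, hp⟩ := (End.mem_maxGenEigenspace _ _ _).mp hu
  obtain ⟨y, rfl⟩ := End.maxGenEigenspace_le_range_pow_sub_smul _ h p hx
  have hBu : ((H - ν • 1) ^ p)ᴴ *ᵥ u = 0 := by
    rw [conjTranspose_pow, conjTranspose_sub, conjTranspose_smul, conjTranspose_one,
      ← toLin'_apply, toLin'_pow_sub_smul]
    exact hp
  rw [← toLin'_pow_sub_smul, toLin'_apply, dotProduct_mulVec,
    ← conjTranspose_conjTranspose ((H - ν • 1) ^ p), ← star_mulVec, hBu, star_zero,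
    zero_dotProduct]

theorem conjTranspose_mulVec_eq_zero_of_mem_maxGenEigenspace [StarRing K] {r : Type*}
    [Fintype r] (H : Matrix n n K) (U : Matrix n r K) {A : Set K}
    (hU : Submodule.span K (Set.range Uᵀ) ≤ ⨆ ν ∈ A, End.maxGenEigenspace (toLin' Hᴴ) (star ν))
    {μ : K} (hμ : μ ∉ A) {x : n → K} (hx : x ∈ End.maxGenEigenspace (toLin' H) μ) :
    Uᴴ *ᵥ x = 0 := by
  have hUx : Submodule.span K (Set.range Uᵀ) ≤ LinearMap.ker (dotProductBilin K K (star x)) :=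
    hU.trans <| iSup₂_le fun ν hν u hu => by
      have := star_dotProduct_eq_zero_of_mem_maxGenEigenspace H (ne_of_mem_of_not_mem hν hμ) hu hx
      rwa [star_dotProduct, star_eq_zero] at this
  funext j
  have hj : star x ⬝ᵥ Uᵀ j = 0 := hUx (Submodule.subset_span ⟨j, rfl⟩)
  calc (Uᴴ *ᵥ x) j = star (star x ⬝ᵥ Uᵀ j) := by simp [mulVec, dotProduct, mul_comm]
    _ = 0 := by rw [hj, star_zero]

end Matrix

theorem subspace_shift_general {n m k : ℕ}
    (H : Matrix (Fin (n + m)) (Fin (n + m)) ℂ) (ξ : Fin (n + m) → ℂ) (s : ℂ)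
    (hchar : H.charpoly = ∏ i, (X - C (ξ i)))
    (hdisj : ∀ i j : Fin (n + m), (i : ℕ) < k → k ≤ (j : ℕ) → ξ i ≠ ξ j)
    (V U : Matrix (Fin (n + m)) (Fin k) ℂ)
    (hVspan : Submodule.span ℂ (Set.range Vᵀ) =
      ⨆ i : Fin (n + m), ⨆ (_ : (i : ℕ) < k),
        Module.End.maxGenEigenspace (Matrix.toLin' H) (ξ i))
    (hUspan : Submodule.span ℂ (Set.range Uᵀ) =
      ⨆ i : Fin (n + m), ⨆ (_ : (i : ℕ) < k),
        Module.End.maxGenEigenspace (Matrix.toLin' Hᴴ) (starRingEnd ℂ (ξ i)))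
    (hUV : IsUnit (Uᴴ * V)) :
    (∀ p : Submodule ℂ (Fin (n + m) → ℂ),
        p.map (Matrix.toLin' H) ≤ p →
        p.map (Matrix.toLin' (H * (1 + s • (V * (Uᴴ * V)⁻¹ * Uᴴ)))) ≤ p) ∧
    (H * (1 + s • (V * (Uᴴ * V)⁻¹ * Uᴴ))).charpoly =
      ∏ i : Fin (n + m), (X - C (if (i : ℕ) < k then (1 + s) * ξ i else ξ i)) := by
  classical
  set Λ₁ : Set ℂ := ξ '' {i | (i : ℕ) < k}
  have hΛ₁ : ∀ i, ξ i ∈ Λ₁ ↔ (i : ℕ) < k := fun i =>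
    ⟨fun ⟨j, hj, hji⟩ => by_contra fun hi => hdisj j i hj (not_lt.mp hi) hji,
      fun hi => ⟨i, hi, rfl⟩⟩
  have hV : LinearMap.range V.mulVecLin = ⨆ μ ∈ Λ₁, End.maxGenEigenspace (toLin' H) μ := by
    rw [range_mulVecLin, iSup_image]
    exact hVspan
  have hU : Submodule.span ℂ (Set.range Uᵀ) =
      ⨆ μ ∈ Λ₁, End.maxGenEigenspace (toLin' Hᴴ) (star μ) := by
    rw [iSup_image]
    exact hUspan
  set P := V * (Uᴴ * V)⁻¹ * Uᴴ
  have hP₁ : ∀ μ ∈ Λ₁, ∀ x ∈ End.maxGenEigenspace (toLin' H) μ, toLin' P x = x :=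
    fun μ hμ x hx => mulVec_mul_nonsing_inv_mul_of_mem_range hUV
      (hV ▸ le_iSup₂ (f := fun μ _ => End.maxGenEigenspace (toLin' H) μ) μ hμ hx)
  have hP₂ : ∀ μ ∉ Λ₁, ∀ x ∈ End.maxGenEigenspace (toLin' H) μ, toLin' P x = 0 :=
    fun μ hμ x hx => by
      rw [toLin'_apply, ← mulVec_mulVec,
        conjTranspose_mulVec_eq_zero_of_mem_maxGenEigenspace H U hU.le hμ hx, mulVec_zero]
  have hĤ : toLin' (H * (1 + s • P)) = toLin' H * (1 + s • toLin' P) := by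
    rw [toLin'_mul, map_add, map_smul, toLin'_one]
    rfl
  refine ⟨fun p hp => ?_, ?_⟩
  · rw [← End.mem_invtSubmodule_iff_map_le] at hp ⊢
    rw [hĤ]
    exact End.invtSubmodule_le_mul_one_add_smul hP₁ hP₂ s hp
  · rw [← charpoly_toLin', hĤ,
      End.charpoly_mul_one_add_smul hP₁ hP₂ s (by rw [charpoly_toLin', hchar])]
    simp_rw [hΛ₁]

/-- **The subspace shift.** Let the spectrum of `H` (with multiplicity) be
`ξ₁, …, ξ_{n+m}`, where `Λ₁ = {ξ₁,…,ξ_k}` and `Λ₂ = {ξ_{k+1},…,ξ_{n+m}}` are disjoint.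
Let `V`, `U` have orthonormal columns spanning the right and left invariant subspaces of
`H` associated with `Λ₁`. Then `Ĥ = H (I + s V (U*V)⁻¹ U*)` has the same right invariant
subspaces as `H`, and its eigenvalues are `(1+s)ξ₁, …, (1+s)ξ_k, ξ_{k+1}, …, ξ_{n+m}`. -/
theorem subspace_shift {n m k : ℕ} (hk : k ≤ n + m)
    (H : Matrix (Fin (n + m)) (Fin (n + m)) ℂ) (ξ : Fin (n + m) → ℂ) (s : ℂ)
    (hchar : H.charpoly = ∏ i, (X - C (ξ i)))
    (hdisj : ∀ i j : Fin (n + m), (i : ℕ) < k → k ≤ (j : ℕ) → ξ i ≠ ξ j)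
    (V U : Matrix (Fin (n + m)) (Fin k) ℂ)
    (hVo : Vᴴ * V = 1) (hUo : Uᴴ * U = 1)
    (hVspan : Submodule.span ℂ (Set.range Vᵀ) =
      ⨆ i : Fin (n + m), ⨆ (_ : (i : ℕ) < k),
        Module.End.maxGenEigenspace (Matrix.toLin' H) (ξ i))
    (hUspan : Submodule.span ℂ (Set.range Uᵀ) =
      ⨆ i : Fin (n + m), ⨆ (_ : (i : ℕ) < k),
        Module.End.maxGenEigenspace (Matrix.toLin' Hᴴ) (starRingEnd ℂ (ξ i)))
    (hUV : IsUnit (Uᴴ * V)) :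
    (∀ p : Submodule ℂ (Fin (n + m) → ℂ),
        p.map (Matrix.toLin' H) ≤ p →
        p.map (Matrix.toLin' (H * (1 + s • (V * (Uᴴ * V)⁻¹ * Uᴴ)))) ≤ p) ∧
    (H * (1 + s • (V * (Uᴴ * V)⁻¹ * Uᴴ))).charpoly =
      ∏ i : Fin (n + m), (X - C (if (i : ℕ) < k then (1 + s) * ξ i else ξ i)) :=
  subspace_shift_general H ξ s hchar hdisj V U hVspan hUspan hUV
end

section
/- Let U and V be matrices with orthonormal columns spanning, respectively, the left and right invariant subspaces of a matrix H for the same set of eigenvalues, where in a suitable orthonormal basis V = [I; 0] and H = [[A₁₁, A₁₂],[0, A₂₂]] with σ(A₁₁) ∩ σ(A₂₂) = ∅. If Z solves A₁₁Z − ZA₂₂ = −A₁₂, then ‖(U*V)⁻¹‖ = ‖(I + ZZ*)^{1/2}‖ = (‖I‖² + ‖Z‖²)^{1/2}, and consequently ‖(U*V)⁻¹‖₂ ≤ 1 + ‖A₁₂‖/sep(A₁₁, A₂₂). -/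
/-!
Write `U₁, U₂` for the two row blocks of `U`. Since `A₁₁ Z + A₁₂ = Z A₂₂`, the matrix `[Zᴴ, I]`
intertwines `Hᴴ` with `A₂₂ᴴ`; as `A₂₂ᴴ - μ̄` is invertible for `μ ∈ σ(A₁₁)`, it kills every
generalized eigenvector of `Hᴴ` for `μ̄`, i.e. the left invariant subspace. Hence `U₂ = -Zᴴ U₁`,
and `UᴴU = 1` becomes `U₁ᴴ S² U₁ = 1`: the matrix `Q = S U₁` is unitary and
`(UᴴV)⁻¹ = (U₁ᴴ)⁻¹ = S Q`, so `‖(UᴴV)⁻¹‖ = ‖S‖`. The C*-identity gives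
`‖S‖² = ‖1 + ZZᴴ‖ = ‖1‖ + ‖Z‖²`, because the positive matrix `ZZᴴ` has its norm in its spectrum.
Finally the Sylvester operator `X ↦ A₁₁ X - X A₂₂` is injective, so `sep(A₁₁, A₂₂) > 0`
and `‖Z‖ ≤ ‖A₁₂‖ / sep(A₁₁, A₂₂)`.
-/

open Matrix ComplexOrder Polynomial
open scoped Matrix.Norms.L2Operator MatrixOrder

/-- The separation of `M` and `N` in the spectral norm. -/
noncomputable def sepS {k l : ℕ} (M : Matrix (Fin k) (Fin k) ℂ)
    (N : Matrix (Fin l) (Fin l) ℂ) : ℝ :=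
  sInf ((fun X : Matrix (Fin k) (Fin l) ℂ => specNorm (M * X - X * N) / specNorm X)
    '' {X | X ≠ 0})

lemma CStarAlgebra.norm_one_add_of_nonneg {A : Type*} [CStarAlgebra A] [PartialOrder A]
    [StarOrderedRing A] {a : A} (ha : 0 ≤ a) : ‖1 + a‖ = ‖(1 : A)‖ + ‖a‖ := by
  nontriviality A
  refine le_antisymm (norm_add_le _ _) ?_
  have hmem : 1 + ‖a‖ ∈ spectrum ℝ (1 + a) := by
    rw [← map_one (algebraMap ℝ A), ← spectrum.singleton_add_eq]
    exact Set.add_mem_add rfl (CStarAlgebra.norm_mem_spectrum_of_nonneg ha)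
  simpa [Real.norm_of_nonneg (by positivity : (0 : ℝ) ≤ 1 + ‖a‖)] using
    spectrum.norm_le_norm_of_mem hmem

lemma Module.End.maxGenEigenspace_le_ker_of_comp_eq {R M M₂ : Type*} [CommRing R]
    [AddCommGroup M] [Module R M] [AddCommGroup M₂] [Module R M₂] {f : End R M} {g : End R M₂}
    {L : M →ₗ[R] M₂} (h : g ∘ₗ L = L ∘ₗ f) {μ : R} (hμ : μ ∉ spectrum R g) :
    f.maxGenEigenspace μ ≤ LinearMap.ker L := by
  intro v hv
  obtain ⟨k, hk⟩ := (f.mem_maxGenEigenspace μ v).1 hv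
  have hshift : (g - μ • 1) ∘ₗ L = L ∘ₗ (f - μ • 1) := by
    ext x
    simpa using congr($h x)
  have hpow : ((g - μ • 1) ^ k) (L v) = 0 := by
    rw [← LinearMap.comp_apply, commute_pow_left_of_commute hshift, LinearMap.comp_apply, hk,
      map_zero]
  have hunit : IsUnit (g - μ • 1) := by
    simpa [Algebra.algebraMap_eq_smul_one] using (spectrum.notMem_iff.1 hμ).neg
  exact (Module.End.isUnit_iff _ |>.1 (hunit.pow k)).1 (hpow.trans (map_zero _).symm)

namespace Matrix

section Sylvester

variable {ι κ R : Type*} [Fintype ι] [Fintype κ]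

lemma pow_mul_eq_mul_pow [DecidableEq ι] [DecidableEq κ] [Semiring R] {A : Matrix ι ι R}
    {B : Matrix κ κ R} {X : Matrix ι κ R} (h : A * X = X * B) (k : ℕ) :
    A ^ k * X = X * B ^ k := by
  induction k with
  | zero => simp
  | succ k ih =>
    rw [pow_succ, pow_succ, Matrix.mul_assoc, h, ← Matrix.mul_assoc, ih, Matrix.mul_assoc]

lemma aeval_mul_eq_mul_aeval [DecidableEq ι] [DecidableEq κ] [CommSemiring R]
    {A : Matrix ι ι R} {B : Matrix κ κ R} {X : Matrix ι κ R} (h : A * X = X * B) (p : R[X]) :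
    aeval A p * X = X * aeval B p := by
  induction p using Polynomial.induction_on' with
  | add p q hp hq => rw [map_add, map_add, Matrix.add_mul, Matrix.mul_add, hp, hq]
  | monomial k a =>
    simp [aeval_monomial, Algebra.algebraMap_eq_smul_one, pow_mul_eq_mul_pow h]

lemma eq_zero_of_mul_eq_mul_of_disjoint_spectrum [DecidableEq ι] [DecidableEq κ] {K : Type*}
    [Field K] [IsAlgClosed K] {A : Matrix ι ι K} {B : Matrix κ κ K}
    (hAB : Disjoint (spectrum K A) (spectrum K B)) {X : Matrix ι κ K} (h : A * X = X * B) :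
    X = 0 := by
  cases isEmpty_or_nonempty κ
  · exact Subsingleton.elim _ _
  have hdeg : 0 < B.charpoly.degree := by
    rw [charpoly_degree_eq_dim]
    exact_mod_cast Fintype.card_pos
  -- by the spectral mapping theorem `χ_B(A)` is invertible, while `χ_B(A) X = X χ_B(B) = 0`
  have hunit : IsUnit (aeval A B.charpoly) := by
    rw [← spectrum.zero_notMem_iff K, spectrum.map_polynomial_aeval_of_degree_pos _ _ hdeg]
    rintro ⟨r, hrA, hr⟩
    exact hAB.notMem_of_mem_left hrA (mem_spectrum_iff_isRoot_charpoly.2 hr)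
  rw [← nonsing_inv_mul_cancel_left (A := aeval A B.charpoly) X
      ((isUnit_iff_isUnit_det _).1 hunit),
    aeval_mul_eq_mul_aeval h, aeval_self_charpoly, Matrix.mul_zero, Matrix.mul_zero]

def sylvesterMap [CommRing R] (A : Matrix ι ι R) (B : Matrix κ κ R) :
    Matrix ι κ R →ₗ[R] Matrix ι κ R :=
  mulLeftLinearMap κ R A - mulRightLinearMap ι R B

@[simp]
lemma sylvesterMap_apply [CommRing R] (A : Matrix ι ι R) (B : Matrix κ κ R) (X : Matrix ι κ R) :
    sylvesterMap A B X = A * X - X * B :=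
  rfl

lemma sylvesterMap_injective [DecidableEq ι] [DecidableEq κ] {K : Type*} [Field K]
    [IsAlgClosed K] {A : Matrix ι ι K} {B : Matrix κ κ K}
    (hAB : Disjoint (spectrum K A) (spectrum K B)) :
    Function.Injective (sylvesterMap A B) := by
  rw [← LinearMap.ker_eq_bot, LinearMap.ker_eq_bot']
  exact fun X hX => eq_zero_of_mul_eq_mul_of_disjoint_spectrum hAB (sub_eq_zero.1 hX)

lemma exists_pos_mul_norm_le_norm_mul_sub_mul [DecidableEq ι] [DecidableEq κ]
    {A : Matrix ι ι ℂ} {B : Matrix κ κ ℂ} (hAB : Disjoint (spectrum ℂ A) (spectrum ℂ B)) :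
    ∃ c > 0, ∀ X : Matrix ι κ ℂ, c * ‖X‖ ≤ ‖A * X - X * B‖ := by
  obtain ⟨K, hK, hanti⟩ := (sylvesterMap A B).exists_antilipschitzWith
    (LinearMap.ker_eq_bot.2 (sylvesterMap_injective hAB))
  refine ⟨(K : ℝ)⁻¹, by positivity, fun X => ?_⟩
  rw [inv_mul_le_iff₀ (by positivity)]
  simpa using ZeroHomClass.bound_of_antilipschitz _ hanti X

end Sylvester

section InvariantSubspace

variable {m n : Type*}

lemma maxGenEigenspace_toLin'_le_ker {K : Type*} [Field K] [Fintype m] [DecidableEq m]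
    [Fintype n] [DecidableEq n] {M : Matrix n n K}
    {N : Matrix m m K} {L : Matrix m n K} (h : L * M = N * L) {μ : K}
    (hμ : μ ∉ spectrum K N) :
    Module.End.maxGenEigenspace (toLin' M) μ ≤ LinearMap.ker (toLin' L) := by
  refine Module.End.maxGenEigenspace_le_ker_of_comp_eq ?_ (by rwa [spectrum_toLin'])
  rw [← toLin'_mul, ← toLin'_mul, h]

lemma mul_eq_zero_of_span_le_ker [Fintype n] [DecidableEq n] {K : Type*} [Field K] {r : Type*}
    {U : Matrix n r K} {L : Matrix m n K} (h : Submodule.span K (Set.range Uᵀ) ≤ LinearMap.ker (toLin' L)) :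
    L * U = 0 := by
  ext i j
  simpa [mul_apply, mulVec, dotProduct] using congr_fun (h (Submodule.subset_span ⟨j, rfl⟩)) i

lemma fromCols_mul_conjTranspose_fromBlocks [Fintype m] [DecidableEq m] [Fintype n] {R : Type*}
    [CommRing R] [StarRing R] {A₁₁ : Matrix n n R} {A₁₂ : Matrix n m R} {A₂₂ : Matrix m m R}
    {Z : Matrix n m R} (hZ : A₁₁ * Z - Z * A₂₂ = -A₁₂) :
    fromCols Zᴴ (1 : Matrix m m R) * (fromBlocks A₁₁ A₁₂ 0 A₂₂)ᴴ =
      A₂₂ᴴ * fromCols Zᴴ (1 : Matrix m m R) := by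
  have h : Zᴴ * A₁₁ᴴ + A₁₂ᴴ = A₂₂ᴴ * Zᴴ := by
    rw [← conjTranspose_mul, ← conjTranspose_mul, ← conjTranspose_add, ← neg_neg A₁₂, ← hZ]
    abel_nf
  rw [Matrix.fromBlocks_conjTranspose, Matrix.fromCols_mul_fromBlocks, Matrix.mul_fromCols]
  simp [h]

lemma toRows₂_eq_neg_mul_toRows₁ [Fintype m] [DecidableEq m] [Fintype n] [DecidableEq n]
    {K : Type*} [Field K] [StarRing K]
    {A₁₁ : Matrix n n K} {A₁₂ : Matrix n m K} {A₂₂ : Matrix m m K}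
    (hdisj : Disjoint (spectrum K A₁₁) (spectrum K A₂₂))
    {Z : Matrix n m K} (hZ : A₁₁ * Z - Z * A₂₂ = -A₁₂) {r : Type*} {U : Matrix (n ⊕ m) r K}
    (hU : Submodule.span K (Set.range Uᵀ) ≤ ⨆ μ ∈ spectrum K A₁₁,
      Module.End.maxGenEigenspace (toLin' (fromBlocks A₁₁ A₁₂ 0 A₂₂)ᴴ) (starRingEnd K μ)) :
    U.toRows₂ = -(Zᴴ * U.toRows₁) := by
  have hker : fromCols Zᴴ (1 : Matrix m m K) * U = 0 := by
    refine mul_eq_zero_of_span_le_ker (hU.trans (iSup₂_le fun μ hμ => ?_))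
    refine maxGenEigenspace_toLin'_le_ker (fromCols_mul_conjTranspose_fromBlocks hZ) fun h => ?_
    rw [← star_eq_conjTranspose, spectrum.map_star, Set.mem_star, starRingEnd_apply,
      star_star] at h
    exact hdisj.notMem_of_mem_left hμ h
  rw [← fromRows_toRows U, fromCols_mul_fromRows, Matrix.one_mul] at hker
  exact eq_neg_of_add_eq_zero_right hker

lemma toRows₁_conjTranspose_mul_mul_eq_one [Fintype m] [Fintype n] [DecidableEq n] {R : Type*}
    [CommRing R] [StarRing R]
    {Z : Matrix n m R} {U : Matrix (n ⊕ m) n R} (hUo : Uᴴ * U = 1)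
    (hU₂ : U.toRows₂ = -(Zᴴ * U.toRows₁)) :
    U.toRows₁ᴴ * (1 + Z * Zᴴ) * U.toRows₁ = 1 := by
  have hblocks : Uᴴ * U = U.toRows₁ᴴ * U.toRows₁ + U.toRows₂ᴴ * U.toRows₂ := by
    conv_lhs => rw [← fromRows_toRows U]
    rw [conjTranspose_fromRows_eq_fromCols_conjTranspose, fromCols_mul_fromRows]
  refine Eq.trans ?_ hUo
  rw [hblocks, hU₂, Matrix.mul_add, Matrix.add_mul, Matrix.mul_one]
  simp only [conjTranspose_neg, conjTranspose_mul, conjTranspose_conjTranspose,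
    Matrix.neg_mul, Matrix.mul_neg, neg_neg, Matrix.mul_assoc]

end InvariantSubspace

section Norms

variable {n m : Type*} [Fintype n] [DecidableEq n] [Fintype m] [DecidableEq m]

lemma norm_inv_conjTranspose_eq {S W : Matrix n n ℂ} (hS : S.IsHermitian)
    (h : Wᴴ * (S * S) * W = 1) : ‖(Wᴴ)⁻¹‖ = ‖S‖ := by
  have hunitary : S * W ∈ unitaryGroup n ℂ := by
    rw [mem_unitaryGroup_iff', star_eq_conjTranspose, conjTranspose_mul, hS.eq, ← h,
      Matrix.mul_assoc, Matrix.mul_assoc, Matrix.mul_assoc]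
  have hinv : (Wᴴ)⁻¹ = S * (S * W) :=
    inv_eq_right_inv (by rw [← h, Matrix.mul_assoc, Matrix.mul_assoc])
  rw [hinv]
  exact CStarRing.norm_mul_coe_unitary S ⟨S * W, hunitary⟩

lemma norm_eq_sqrt_of_mul_self_eq {S : Matrix n n ℂ} {Z : Matrix n m ℂ} (hS : S.IsHermitian)
    (h : S * S = 1 + Z * Zᴴ) : ‖S‖ = √(‖(1 : Matrix n n ℂ)‖ ^ 2 + ‖Z‖ ^ 2) := by
  have hone : ‖(1 : Matrix n n ℂ)‖ ^ 2 = ‖(1 : Matrix n n ℂ)‖ := by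
    rw [sq, ← CStarRing.norm_star_mul_self, star_one, one_mul]
  have hZ : ‖Z * Zᴴ‖ = ‖Z‖ ^ 2 := by
    simpa [sq, l2_opNorm_conjTranspose] using l2_opNorm_conjTranspose_mul_self Zᴴ
  have hS2 : ‖S * S‖ = ‖S‖ * ‖S‖ := by
    simpa [hS.eq] using l2_opNorm_conjTranspose_mul_self S
  rw [hone, ← hZ,
    ← CStarAlgebra.norm_one_add_of_nonneg (posSemidef_self_mul_conjTranspose Z).nonneg, ← h, hS2,
    Real.sqrt_mul_self (norm_nonneg S)]

end Norms

end Matrix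

section Separation

variable {k l : ℕ} {M : Matrix (Fin k) (Fin k) ℂ} {N : Matrix (Fin l) (Fin l) ℂ}

lemma zero_mem_lowerBounds_sepS_set :
    0 ∈ lowerBounds ((fun X : Matrix (Fin k) (Fin l) ℂ =>
      specNorm (M * X - X * N) / specNorm X) '' {X | X ≠ 0}) := by
  rintro _ ⟨Y, -, rfl⟩
  exact div_nonneg (norm_nonneg _) (norm_nonneg Y)

lemma sepS_nonneg : 0 ≤ sepS M N :=
  Real.sInf_nonneg zero_mem_lowerBounds_sepS_set

lemma sepS_mul_norm_le (X : Matrix (Fin k) (Fin l) ℂ) : sepS M N * ‖X‖ ≤ ‖M * X - X * N‖ := by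
  rcases eq_or_ne X 0 with rfl | hX
  · simp
  exact (le_div_iff₀ (norm_pos_iff.2 hX)).1
    (csInf_le ⟨0, zero_mem_lowerBounds_sepS_set⟩ ⟨X, hX, rfl⟩)

lemma sepS_pos (hMN : Disjoint (spectrum ℂ M) (spectrum ℂ N)) {X : Matrix (Fin k) (Fin l) ℂ}
    (hX : X ≠ 0) : 0 < sepS M N := by
  obtain ⟨c, hc, hbound⟩ := exists_pos_mul_norm_le_norm_mul_sub_mul hMN
  refine hc.trans_le (le_csInf ⟨_, X, hX, rfl⟩ ?_)
  rintro _ ⟨Y, hY, rfl⟩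
  exact (le_div_iff₀ (norm_pos_iff.2 hY)).2 (hbound Y)

lemma norm_le_div_sepS (hMN : Disjoint (spectrum ℂ M) (spectrum ℂ N))
    {C Z : Matrix (Fin k) (Fin l) ℂ} (hZ : M * Z - Z * N = -C) : ‖Z‖ ≤ ‖C‖ / sepS M N := by
  rcases eq_or_ne Z 0 with rfl | hZ0
  · rw [norm_zero]
    exact div_nonneg (norm_nonneg C) sepS_nonneg
  rw [le_div_iff₀ (sepS_pos hMN hZ0), mul_comm, ← norm_neg C, ← hZ]
  exact sepS_mul_norm_le Z

end Separation

/-- Conditioning of `U* V`: if, in a suitable basis, `V = [I; 0]` and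
`H = [[A₁₁, A₁₂],[0, A₂₂]]` with disjoint diagonal-block spectra, `Z` solves
`A₁₁ Z - Z A₂₂ = -A₁₂`, and `U` is an orthonormal basis of the left invariant subspace
of `H` for `σ(A₁₁)`, then `‖(U*V)⁻¹‖ = ‖(I + ZZ*)^{1/2}‖ = (‖I‖² + ‖Z‖²)^{1/2}` and
consequently `‖(U*V)⁻¹‖₂ ≤ 1 + ‖A₁₂‖ / sep(A₁₁, A₂₂)`. -/
theorem cond_of_UstarV {n m : ℕ}
    (A₁₁ : Matrix (Fin n) (Fin n) ℂ) (A₁₂ : Matrix (Fin n) (Fin m) ℂ)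
    (A₂₂ : Matrix (Fin m) (Fin m) ℂ)
    (hdisj : spectrum ℂ A₁₁ ∩ spectrum ℂ A₂₂ = ∅)
    (H : Matrix (Fin n ⊕ Fin m) (Fin n ⊕ Fin m) ℂ)
    (hH : H = Matrix.fromBlocks A₁₁ A₁₂ 0 A₂₂)
    (Z : Matrix (Fin n) (Fin m) ℂ) (hZ : A₁₁ * Z - Z * A₂₂ = -A₁₂)
    (V : Matrix (Fin n ⊕ Fin m) (Fin n) ℂ)
    (hV : V = Matrix.fromRows (1 : Matrix (Fin n) (Fin n) ℂ) 0)
    (U : Matrix (Fin n ⊕ Fin m) (Fin n) ℂ) (hUo : Uᴴ * U = 1)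
    (hUspan : Submodule.span ℂ (Set.range Uᵀ) =
      ⨆ μ ∈ spectrum ℂ A₁₁,
        Module.End.maxGenEigenspace (Matrix.toLin' Hᴴ) (starRingEnd ℂ μ))
    (S : Matrix (Fin n) (Fin n) ℂ) (hS : S.PosSemidef)
    (hSsq : S * S = 1 + Z * Zᴴ) :
    specNorm ((Uᴴ * V)⁻¹) = specNorm S ∧
    specNorm S =
      Real.sqrt (specNorm (1 : Matrix (Fin n) (Fin n) ℂ) ^ 2 + specNorm Z ^ 2) ∧
    specNorm ((Uᴴ * V)⁻¹) ≤ 1 + specNorm A₁₂ / sepS A₁₁ A₂₂ := by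
  subst hH
  rw [← Set.disjoint_iff_inter_eq_empty] at hdisj
  have hU₂ := toRows₂_eq_neg_mul_toRows₁ hdisj hZ hUspan.le
  have hUV : Uᴴ * V = U.toRows₁ᴴ := by
    rw [hV]
    conv_lhs => rw [← fromRows_toRows U]
    rw [conjTranspose_fromRows_eq_fromCols_conjTranspose, fromCols_mul_fromRows, Matrix.mul_one,
      Matrix.mul_zero, add_zero]
  have hinv : specNorm ((Uᴴ * V)⁻¹) = specNorm S := by
    rw [hUV]
    exact norm_inv_conjTranspose_eq hS.isHermitian
      (hSsq ▸ toRows₁_conjTranspose_mul_mul_eq_one hUo hU₂)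
  have hS_eq : specNorm S = √(specNorm (1 : Matrix (Fin n) (Fin n) ℂ) ^ 2 + specNorm Z ^ 2) :=
    norm_eq_sqrt_of_mul_self_eq hS.isHermitian hSsq
  refine ⟨hinv, hS_eq, ?_⟩
  have hone : ‖(1 : Matrix (Fin n) (Fin n) ℂ)‖ ≤ 1 := by
    nontriviality Matrix (Fin n) (Fin n) ℂ
    exact CStarRing.norm_one.le
  calc specNorm ((Uᴴ * V)⁻¹)
      = √(‖(1 : Matrix (Fin n) (Fin n) ℂ)‖ ^ 2 + ‖Z‖ ^ 2) := hinv.trans hS_eq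
    _ ≤ ‖(1 : Matrix (Fin n) (Fin n) ℂ)‖ + ‖Z‖ :=
      Real.sqrt_le_iff.2 ⟨by positivity,
        by nlinarith [norm_nonneg Z, norm_nonneg (1 : Matrix (Fin n) (Fin n) ℂ)]⟩
    _ ≤ 1 + specNorm A₁₂ / sepS A₁₁ A₂₂ := add_le_add hone (norm_le_div_sepS hdisj hZ)
end
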